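/- Let G be the discrete Heisenberg group ⟨a,b,c | [a,b]=c, [a,c]=[b,c]=1⟩ (equivalently, the group of upper unitriangular 3×3 integer matrices). Then G_bound(4) equals the center Z(G) of G, which is the infinite cyclic subgroup generated by c. In particular, for every symmetric generating set S of G of cardinality at most 4, l_S(c) ≤ 4. -/

import Mathlib

/-- A finite symmetric generating set of a group. -/
def IsSymmGen {G : Type*} [Group G] (S : Finset G) : Prop :=
  (∀ s ∈ S, s⁻¹ ∈ S) ∧ Subgroup.closure (S : Set G) = ⊤

/-- The word length of `g` with respect to `S`: the least `n` such that
`g` is a product of `n` elements of `S`. -/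
noncomputable def wordLen {G : Type*} [Group G] (S : Finset G) (g : G) : ℕ :=
  sInf {n : ℕ | ∃ w : List G, (∀ s ∈ w, s ∈ S) ∧ w.length = n ∧ w.prod = g}

/-- Elements of uniformly bounded word length. -/
def GBound (G : Type*) [Group G] : Set G :=
  {g | ∃ M : ℕ, 0 < M ∧ ∀ S : Finset G, IsSymmGen S → wordLen S g ≤ M}

/-- Elements of uniformly bounded word length over symmetric generating sets of
cardinality at most `d`. -/
def GBoundD (G : Type*) [Group G] (d : ℕ) : Set G :=
  {g | ∃ M : ℕ, 0 < M ∧ ∀ S : Finset G, IsSymmGen S → S.card ≤ d →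
    wordLen S g ≤ M}

/-- Relations of the Heisenberg group `⟨a,b,c | [a,b] = c, [a,c] = [b,c] = 1⟩`.
Here `0, 1, 2` stand for `a, b, c`. -/
def heisenbergRels : Set (FreeGroup (Fin 3)) :=
  { FreeGroup.of 0 * FreeGroup.of 1 * (FreeGroup.of 0)⁻¹ * (FreeGroup.of 1)⁻¹ *
      (FreeGroup.of 2)⁻¹,
    FreeGroup.of 0 * FreeGroup.of 2 * (FreeGroup.of 0)⁻¹ * (FreeGroup.of 2)⁻¹,
    FreeGroup.of 1 * FreeGroup.of 2 * (FreeGroup.of 1)⁻¹ * (FreeGroup.of 2)⁻¹ }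

/-- The discrete Heisenberg group. -/
abbrev Heisenberg : Type := PresentedGroup heisenbergRels

/-!
A symmetric generating set of the Heisenberg group with at most four elements has the form
`{1, u, u⁻¹, v, v⁻¹}`, since the group has no involutions. As `u` and `v` generate, their images
in the abelianisation `ℤ²` form a basis, so `⁅u, v⁆ = c^{±1}` has length at most `4`, and `c ^ k`
has length at most `4 |k|`.

Conversely, a non-central `g` has nonzero image in `ℤ²`. For every bound `M` there are a basis
`(u, v)` of `ℤ²` and a linear form `f` with `|f u|, |f v| ≤ 1` and `|f g| > M`; since `f` changes
by at most `1` per letter of `{u^±1, v^±1}`, the word length of `g` exceeds `M`.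

The computations take place in the model `ℤ³` with
`(x, y, z) * (x', y', z') = (x + x', y + y', z + z' + x y')`, isomorphic to the presented group.
-/

open scoped commutatorElement

section WordLength

variable {G : Type*} [Group G] {S : Finset G}

lemma wordLen_le_length {w : List G} (hw : ∀ s ∈ w, s ∈ S) : wordLen S w.prod ≤ w.length :=
  Nat.sInf_le ⟨w, hw, rfl, rfl⟩

lemma IsSymmGen.exists_word_length_eq_wordLen (hS : IsSymmGen S) (g : G) :
    ∃ w : List G, (∀ s ∈ w, s ∈ S) ∧ w.length = wordLen S g ∧ w.prod = g := by
  have hg : g ∈ (Subgroup.closure (S : Set G)).toSubmonoid := hS.2 ▸ Subgroup.mem_top g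
  rw [Subgroup.closure_toSubmonoid] at hg
  obtain ⟨w, hw, rfl⟩ := Submonoid.exists_list_of_mem_closure hg
  refine Nat.sInf_mem (s := {n | ∃ v : List G, (∀ s ∈ v, s ∈ S) ∧ v.length = n ∧ v.prod = w.prod})
    ⟨w.length, w, fun s hs => ?_, rfl, rfl⟩
  rcases hw s hs with h | h
  · exact h
  · simpa using hS.1 _ h

lemma IsSymmGen.wordLen_mul_le (hS : IsSymmGen S) (g h : G) :
    wordLen S (g * h) ≤ wordLen S g + wordLen S h := by
  obtain ⟨v, hvS, hv, rfl⟩ := hS.exists_word_length_eq_wordLen g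
  obtain ⟨w, hwS, hw, rfl⟩ := hS.exists_word_length_eq_wordLen h
  rw [← hv, ← hw, ← List.length_append, ← List.prod_append]
  exact wordLen_le_length fun s hs => (List.mem_append.mp hs).elim (hvS s) (hwS s)

lemma IsSymmGen.wordLen_inv_le (hS : IsSymmGen S) (g : G) : wordLen S g⁻¹ ≤ wordLen S g := by
  obtain ⟨w, hwS, hw, rfl⟩ := hS.exists_word_length_eq_wordLen g
  rw [← hw, List.prod_inv_reverse, ← List.length_map (f := fun x : G => x⁻¹), ← List.length_reverse]
  refine wordLen_le_length fun s hs => ?_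
  obtain ⟨t, ht, rfl⟩ := List.mem_map.mp (List.mem_reverse.mp hs)
  exact hS.1 t (hwS t ht)

lemma IsSymmGen.wordLen_pow_le (hS : IsSymmGen S) (g : G) (n : ℕ) :
    wordLen S (g ^ n) ≤ n * wordLen S g := by
  induction n with
  | zero => simpa using wordLen_le_length (S := S) (w := []) (by simp)
  | succ n ih =>
    rw [pow_succ, Nat.succ_mul]
    exact (hS.wordLen_mul_le _ _).trans (Nat.add_le_add_right ih _)

lemma IsSymmGen.wordLen_zpow_le (hS : IsSymmGen S) (g : G) (k : ℤ) :
    wordLen S (g ^ k) ≤ k.natAbs * wordLen S g := by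
  obtain ⟨n, rfl | rfl⟩ := k.eq_nat_or_neg
  · simpa using hS.wordLen_pow_le g n
  · simpa using (hS.wordLen_inv_le _).trans (hS.wordLen_pow_le g n)

lemma wordLen_commutatorElement_le (hS : ∀ s ∈ S, s⁻¹ ∈ S) {u v : G} (hu : u ∈ S) (hv : v ∈ S) :
    wordLen S ⁅u, v⁆ ≤ 4 := by
  simpa [commutatorElement_def, mul_assoc] using
    wordLen_le_length (S := S) (w := [u, v, u⁻¹, v⁻¹]) (by simp [hu, hv, hS u hu, hS v hv])

lemma IsSymmGen.abs_le_wordLen (hS : IsSymmGen S) {f : G → ℤ}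
    (hf : ∀ g h, f (g * h) = f g + f h) (hfS : ∀ s ∈ S, |f s| ≤ 1) (g : G) :
    |f g| ≤ wordLen S g := by
  obtain ⟨w, hwS, hw, rfl⟩ := hS.exists_word_length_eq_wordLen g
  rw [← hw]
  clear hw
  induction w with
  | nil => simpa using hf 1 1
  | cons s w ih =>
    have hs := hfS s (hwS s List.mem_cons_self)
    have hw := ih fun t ht => hwS t (List.mem_cons_of_mem s ht)
    rw [List.prod_cons, hf, List.length_cons, Nat.cast_succ]
    linarith [abs_add_le (f s) (f w.prod)]

end WordLength

namespace MulEquiv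

variable {G G' : Type*} [Group G] [Group G'] (e : G ≃* G')

lemma isSymmGen_map {S : Finset G} (hS : IsSymmGen S) :
    IsSymmGen (S.map e.toEquiv.toEmbedding) := by
  refine ⟨fun s hs => ?_, ?_⟩
  · obtain ⟨t, ht, rfl⟩ := Finset.mem_map.mp hs
    exact Finset.mem_map.mpr ⟨t⁻¹, hS.1 t ht, map_inv e t⟩
  · have := MonoidHom.map_closure e.toMonoidHom (S : Set G)
    rw [hS.2, Subgroup.map_top_of_surjective _ e.surjective] at this
    simpa using this.symm

lemma wordLen_map (S : Finset G) (g : G) :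
    wordLen (S.map e.toEquiv.toEmbedding) (e g) = wordLen S g := by
  unfold wordLen
  congr 1
  ext n
  constructor
  · rintro ⟨w, hwS, rfl, hw⟩
    refine ⟨w.map e.symm, fun s hs => ?_, List.length_map _, ?_⟩
    · obtain ⟨t, ht, rfl⟩ := List.mem_map.mp hs
      obtain ⟨u, hu, rfl⟩ := Finset.mem_map.mp (hwS t ht)
      simpa using hu
    · rw [← map_list_prod e.symm, hw, symm_apply_apply]
  · rintro ⟨w, hwS, rfl, rfl⟩
    refine ⟨w.map e, fun s hs => ?_, List.length_map _, (map_list_prod e w).symm⟩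
    obtain ⟨t, ht, rfl⟩ := List.mem_map.mp hs
    exact Finset.mem_map_of_mem _ (hwS t ht)

lemma GBoundD_subset_preimage (d : ℕ) : GBoundD G d ⊆ e ⁻¹' GBoundD G' d := by
  rintro g ⟨M, hM, hg⟩
  refine ⟨M, hM, fun S hS hcard => ?_⟩
  have hS' : (S.map e.symm.toEquiv.toEmbedding).map e.toEquiv.toEmbedding = S := by
    simp [Finset.map_map]
  rw [← hS', wordLen_map]
  exact hg _ (e.symm.isSymmGen_map hS) (by simpa using hcard)

lemma preimage_GBoundD (d : ℕ) : e ⁻¹' GBoundD G' d = GBoundD G d :=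
  (Set.subset_def.mpr fun g hg => by simpa using e.symm.GBoundD_subset_preimage d hg).antisymm
    (e.GBoundD_subset_preimage d)

lemma comap_center : (Subgroup.center G').comap (e : G →* G') = Subgroup.center G := by
  ext g
  simp only [Subgroup.mem_comap, Subgroup.mem_center_iff]
  refine ⟨fun h h' => e.injective ?_, fun h h' => ?_⟩
  · simpa using h (e h')
  · simpa using congrArg e (h (e.symm h'))

lemma comap_zpowers (g : G) :
    (Subgroup.zpowers (e g)).comap (e : G →* G') = Subgroup.zpowers g := by
  rw [Subgroup.comap_equiv_eq_map_symm, MonoidHom.map_zpowers]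
  simp

end MulEquiv

section SmallGeneratingSets

variable {G : Type*} [Group G]

lemma mul_zpow_eq_of_mul_eq {a b c : G} (hbc : Commute b c) (h : a * b = c * b * a) (n : ℤ) :
    a * b ^ n = c ^ n * b ^ n * a := by
  have hconj : a * b * a⁻¹ = c * b := by rw [h, mul_inv_cancel_right]
  rw [← hbc.symm.mul_zpow, ← hconj, conj_zpow, inv_mul_cancel_right]

lemma zpow_mul_zpow_eq_of_mul_eq {a b c : G} (hac : Commute a c) (hbc : Commute b c)
    (h : a * b = c * b * a) (m n : ℤ) : a ^ m * b ^ n = c ^ (m * n) * b ^ n * a ^ m := by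
  have hba : b ^ n * a = c ^ (-n) * a * b ^ n := by
    rw [mul_assoc (c ^ (-n)), mul_zpow_eq_of_mul_eq hbc h n]
    group
  have := mul_zpow_eq_of_mul_eq (hac.zpow_right (-n)) hba m
  calc a ^ m * b ^ n = c ^ (m * n) * ((c ^ (-n)) ^ m * a ^ m * b ^ n) := by group
    _ = c ^ (m * n) * b ^ n * a ^ m := by rw [← this, mul_assoc]

lemma Finset.exists_subset_insert_one_pair [DecidableEq G] (hG : ∀ g : G, g⁻¹ = g → g = 1)
    {S : Finset G} (hS : ∀ s ∈ S, s⁻¹ ∈ S) (hcard : S.card ≤ 4) (hne : S.Nonempty) :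
    ∃ u ∈ S, ∃ v ∈ S, (S : Set G) ⊆ {1, u, u⁻¹, v, v⁻¹} := by
  by_cases h1 : ∃ u ∈ S, u ≠ 1
  swap
  · push Not at h1
    obtain ⟨u, hu⟩ := hne
    exact ⟨u, hu, u, hu, fun s hs => Or.inl (h1 s hs)⟩
  obtain ⟨u, hu, hu1⟩ := h1
  by_cases h2 : ∃ v ∈ S, v ≠ 1 ∧ v ≠ u ∧ v ≠ u⁻¹
  swap
  · push Not at h2
    refine ⟨u, hu, u, hu, fun s hs => ?_⟩
    by_cases hs1 : s = 1
    · simp [hs1]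
    by_cases hsu : s = u
    · simp [hsu]
    simp [h2 s hs hs1 hsu]
  obtain ⟨v, hv, hv1, hvu, hvu'⟩ := h2
  refine ⟨u, hu, v, hv, fun s hs => ?_⟩
  have hsub : ({u, u⁻¹, v, v⁻¹} : Finset G) ⊆ S := by
    simp [Finset.insert_subset_iff, hu, hv, hS u hu, hS v hv]
  have huu : u ≠ u⁻¹ := fun h => hu1 (hG u h.symm)
  have hvv : v ≠ v⁻¹ := fun h => hv1 (hG v h.symm)
  have huv : u ≠ v⁻¹ := fun h => hvu' (by rw [h, inv_inv])
  have hfour : ({u, u⁻¹, v, v⁻¹} : Finset G).card = 4 := by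
    rw [Finset.card_insert_of_notMem, Finset.card_insert_of_notMem, Finset.card_pair hvv]
    · simp [hvu, hvu', eq_comm (a := u⁻¹)]
    · simp [huu, Ne.symm hvu, huv]
  rw [← Finset.eq_of_subset_of_card_le hsub (hfour ▸ hcard)] at hs
  simp only [Finset.coe_insert, Finset.coe_singleton, Set.mem_insert_iff,
    Set.mem_singleton_iff] at hs ⊢
  tauto

lemma IsSymmGen.exists_closure_pair_eq_top [Nontrivial G] (hG : ∀ g : G, g⁻¹ = g → g = 1)
    {S : Finset G} (hS : IsSymmGen S) (hcard : S.card ≤ 4) :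
    ∃ u ∈ S, ∃ v ∈ S, Subgroup.closure {u, v} = ⊤ := by
  classical
  have hne : S.Nonempty := by
    rw [Finset.nonempty_iff_ne_empty]
    rintro rfl
    simpa using hS.2
  obtain ⟨u, hu, v, hv, hsub⟩ := Finset.exists_subset_insert_one_pair hG hS.1 hcard hne
  refine ⟨u, hu, v, hv, top_le_iff.mp (hS.2 ▸ Subgroup.closure_le _ |>.mpr ?_)⟩
  have hu' : u ∈ Subgroup.closure {u, v} := Subgroup.subset_closure (by simp)
  have hv' : v ∈ Subgroup.closure {u, v} := Subgroup.subset_closure (by simp)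
  intro s hs
  rcases hsub hs with rfl | rfl | rfl | rfl | rfl
  exacts [one_mem _, hu', inv_mem hu', hv', inv_mem hv']

end SmallGeneratingSets

@[ext]
structure HModel where
  x : ℤ
  y : ℤ
  z : ℤ
deriving DecidableEq

namespace HModel

-- `⟨x, y, z⟩` is the unitriangular matrix `[[1, x, z], [0, 1, y], [0, 0, 1]]`.
instance : One HModel := ⟨⟨0, 0, 0⟩⟩
instance : Mul HModel := ⟨fun g h => ⟨g.x + h.x, g.y + h.y, g.z + h.z + g.x * h.y⟩⟩
instance : Inv HModel := ⟨fun g => ⟨-g.x, -g.y, g.x * g.y - g.z⟩⟩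

@[simp] lemma one_x : (1 : HModel).x = 0 := rfl
@[simp] lemma one_y : (1 : HModel).y = 0 := rfl
@[simp] lemma one_z : (1 : HModel).z = 0 := rfl
@[simp] lemma mul_x (g h : HModel) : (g * h).x = g.x + h.x := rfl
@[simp] lemma mul_y (g h : HModel) : (g * h).y = g.y + h.y := rfl
@[simp] lemma mul_z (g h : HModel) : (g * h).z = g.z + h.z + g.x * h.y := rfl
@[simp] lemma inv_x (g : HModel) : g⁻¹.x = -g.x := rfl
@[simp] lemma inv_y (g : HModel) : g⁻¹.y = -g.y := rfl
@[simp] lemma inv_z (g : HModel) : g⁻¹.z = g.x * g.y - g.z := rfl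

instance : Group HModel where
  mul_assoc g h k := by ext <;> simp <;> ring
  one_mul g := by ext <;> simp
  mul_one g := by ext <;> simp
  inv_mul_cancel g := by ext <;> simp

def A : HModel := ⟨1, 0, 0⟩
def B : HModel := ⟨0, 1, 0⟩
def C : HModel := ⟨0, 0, 1⟩

instance : Nontrivial HModel := ⟨⟨1, C, fun h => by simpa [C] using congrArg z h⟩⟩

lemma zpow_x (g : HModel) (k : ℤ) : (g ^ k).x = k * g.x := by
  induction k using Int.induction_on with
  | zero => simp
  | succ n ih => rw [zpow_add_one, mul_x, ih]; ring
  | pred n ih => rw [zpow_sub_one, mul_x, inv_x, ih]; ring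

lemma zpow_y (g : HModel) (k : ℤ) : (g ^ k).y = k * g.y := by
  induction k using Int.induction_on with
  | zero => simp
  | succ n ih => rw [zpow_add_one, mul_y, ih]; ring
  | pred n ih => rw [zpow_sub_one, mul_y, inv_y, ih]; ring

lemma mk_zpow {a b c : ℤ} (hab : a * b = 0) (k : ℤ) :
    (⟨a, b, c⟩ : HModel) ^ k = ⟨k * a, k * b, k * c⟩ := by
  induction k using Int.induction_on with
  | zero => ext <;> simp
  | succ n ih => ext <;> simp [zpow_add_one, ih, mul_assoc, hab] <;> ring
  | pred n ih => ext <;> simp [zpow_sub_one, ih, mul_assoc, hab] <;> ring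

lemma C_zpow (k : ℤ) : C ^ k = ⟨0, 0, k⟩ := by
  unfold C
  simpa using mk_zpow (a := 0) (b := 0) (c := 1) (by simp) k

def det (g h : HModel) : ℤ := g.x * h.y - h.x * g.y

lemma commutatorElement_eq (g h : HModel) : ⁅g, h⁆ = ⟨0, 0, det g h⟩ := by
  ext <;> simp [commutatorElement_def, det]; ring

lemma mem_center_iff {g : HModel} : g ∈ Subgroup.center HModel ↔ g.x = 0 ∧ g.y = 0 := by
  rw [Subgroup.mem_center_iff]
  refine ⟨fun h => ?_, fun ⟨hx, hy⟩ h => ?_⟩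
  · have hA := congrArg z (h A)
    have hB := congrArg z (h B)
    simp [A, B] at hA hB
    omega
  · ext <;> simp [hx, hy]; ring

lemma center_eq_zpowers_C : Subgroup.center HModel = Subgroup.zpowers C := by
  ext g
  rw [mem_center_iff, Subgroup.mem_zpowers_iff]
  refine ⟨fun ⟨hx, hy⟩ => ⟨g.z, ?_⟩, fun ⟨k, hk⟩ => ?_⟩
  · ext <;> simp [C_zpow, hx, hy]
  · simp [← hk, C_zpow]

lemma not_isOfFinOrder_C : ¬ IsOfFinOrder C := by
  rw [isOfFinOrder_iff_zpow_eq_one]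
  rintro ⟨k, hk, h⟩
  exact hk (congrArg z ((C_zpow k).symm.trans h))

lemma eq_one_of_inv_eq_self {g : HModel} (h : g⁻¹ = g) : g = 1 := by
  simp only [HModel.ext_iff, inv_x, inv_y, inv_z] at h
  have hx : g.x = 0 := by omega
  have hy : g.y = 0 := by omega
  rw [hx, hy] at h
  ext <;> simp <;> omega

def abSpan (u v : HModel) : Subgroup HModel where
  carrier := {g | ∃ m n : ℤ, g.x = m * u.x + n * v.x ∧ g.y = m * u.y + n * v.y}
  one_mem' := ⟨0, 0, by simp⟩
  mul_mem' := by
    rintro g h ⟨m, n, hgx, hgy⟩ ⟨m', n', hhx, hhy⟩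
    exact ⟨m + m', n + n', by simp [hgx, hhx]; ring, by simp [hgy, hhy]; ring⟩
  inv_mem' := by
    rintro g ⟨m, n, hx, hy⟩
    exact ⟨-m, -n, by simp [hx]; ring, by simp [hy]; ring⟩

lemma det_eq_one_or_neg_one_of_closure_eq_top {u v : HModel}
    (h : Subgroup.closure {u, v} = ⊤) : det u v = 1 ∨ det u v = -1 := by
  have hspan : Subgroup.closure {u, v} ≤ abSpan u v := by
    rw [Subgroup.closure_le]
    rintro g (rfl | rfl)
    exacts [⟨1, 0, by simp, by simp⟩, ⟨0, 1, by simp, by simp⟩]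
  rw [h] at hspan
  obtain ⟨m, n, h1, h2⟩ := hspan (Subgroup.mem_top A)
  obtain ⟨m', n', h3, h4⟩ := hspan (Subgroup.mem_top B)
  simp only [A, B] at h1 h2 h3 h4
  refine Int.eq_one_or_neg_one_of_mul_eq_one (u := det u v) (v := m * n' - n * m') ?_
  unfold det
  linear_combination (-(m' * u.y + n' * v.y)) * h1 - h4 + (m * u.y + n * v.y) * h3

lemma closure_eq_top_of_det_eq_one {u v : HModel} (h : det u v = 1) :
    Subgroup.closure {u, v} = ⊤ := by
  have hu : u ∈ Subgroup.closure {u, v} := Subgroup.subset_closure (by simp)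
  have hv : v ∈ Subgroup.closure {u, v} := Subgroup.subset_closure (by simp)
  have hC : C ∈ Subgroup.closure {u, v} := by
    have : ⁅u, v⁆ = C := by rw [commutatorElement_eq, h]; rfl
    rw [← this, commutatorElement_def]
    exact mul_mem (mul_mem (mul_mem hu hv) (inv_mem hu)) (inv_mem hv)
  refine eq_top_iff.mpr fun g _ => ?_
  -- `g` agrees with `u ^ m * v ^ n` modulo the centre, by Cramer's rule.
  set m := g.x * v.y - g.y * v.x
  set n := u.x * g.y - u.y * g.x
  have hcen : g * (u ^ m * v ^ n)⁻¹ ∈ Subgroup.zpowers C := by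
    rw [← center_eq_zpowers_C, mem_center_iff]
    unfold det at h
    constructor
    · simp [zpow_x]; linear_combination (-g.x) * h
    · simp [zpow_y]; linear_combination (-g.y) * h
  have := mul_mem ((Subgroup.zpowers_le.mpr hC) hcen) (mul_mem (zpow_mem hu m) (zpow_mem hv n))
  rwa [inv_mul_cancel_right] at this


lemma exists_commutatorElement_eq_C {S : Finset HModel} (hS : IsSymmGen S) (hcard : S.card ≤ 4) :
    ∃ u ∈ S, ∃ v ∈ S, ⁅u, v⁆ = C := by
  obtain ⟨u, hu, v, hv, hcl⟩ := hS.exists_closure_pair_eq_top (fun _ => eq_one_of_inv_eq_self) hcard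
  rcases det_eq_one_or_neg_one_of_closure_eq_top hcl with h | h
  · exact ⟨u, hu, v, hv, by rw [commutatorElement_eq, h]; rfl⟩
  · refine ⟨v, hv, u, hu, ?_⟩
    rw [commutatorElement_eq]
    unfold det at h ⊢
    ext <;> simp [C]; linarith

lemma wordLen_C_le {S : Finset HModel} (hS : IsSymmGen S) (hcard : S.card ≤ 4) :
    wordLen S C ≤ 4 := by
  obtain ⟨u, hu, v, hv, h⟩ := exists_commutatorElement_eq_C hS hcard
  exact h ▸ wordLen_commutatorElement_le hS.1 hu hv

lemma isSymmGen_of_det_eq_one {u v : HModel} (h : det u v = 1) :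
    IsSymmGen ({u, u⁻¹, v, v⁻¹} : Finset HModel) := by
  refine ⟨fun s hs => ?_, top_le_iff.mp ?_⟩
  · simp only [Finset.mem_insert, Finset.mem_singleton] at hs ⊢
    rcases hs with rfl | rfl | rfl | rfl <;> simp
  · rw [← closure_eq_top_of_det_eq_one h]
    exact Subgroup.closure_mono (by simp [Set.insert_subset_iff])

lemma abs_le_wordLen_of_det_eq_one {u v : HModel} (h : det u v = 1) {α β : ℤ}
    (hu : |α * u.x + β * u.y| ≤ 1) (hv : |α * v.x + β * v.y| ≤ 1) (g : HModel) :
    |α * g.x + β * g.y| ≤ wordLen {u, u⁻¹, v, v⁻¹} g := by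
  refine (isSymmGen_of_det_eq_one h).abs_le_wordLen (f := fun g => α * g.x + β * g.y)
    (fun g h => by simp only [mul_x, mul_y]; ring) (fun s hs => ?_) g
  simp only [Finset.mem_insert, Finset.mem_singleton] at hs
  rcases hs with rfl | rfl | rfl | rfl
  · exact hu
  · rw [inv_x, inv_y, ← abs_neg]
    convert hu using 2
    ring
  · exact hv
  · rw [inv_x, inv_y, ← abs_neg]
    convert hv using 2
    ring

lemma exists_isSymmGen_lt_wordLen {g : HModel} (hg : g ∉ Subgroup.center HModel) (M : ℕ) :
    ∃ S : Finset HModel, IsSymmGen S ∧ S.card ≤ 4 ∧ M < wordLen S g := by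
  rw [mem_center_iff] at hg
  by_cases hx : g.x = 0
  · have hy : g.y ≠ 0 := fun hy => hg ⟨hx, hy⟩
    set n : ℤ := M + 1
    have hdet : det A ⟨n, 1, 0⟩ = 1 := by simp [det, A]
    refine ⟨_, isSymmGen_of_det_eq_one hdet, Finset.card_le_four, ?_⟩
    have hlen := abs_le_wordLen_of_det_eq_one hdet (α := 1) (β := -n) (by simp [A]) (by simp) g
    have hgy : 1 ≤ |g.y| := Int.one_le_abs hy
    have hlt : (M : ℤ) < |1 * g.x + -n * g.y| := by
      rw [hx, mul_zero, zero_add, neg_mul, abs_neg, abs_mul, abs_of_pos (by positivity : 0 < n)]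
      nlinarith
    exact_mod_cast hlt.trans_le hlen
  · set n : ℤ := M + |g.y| + 1
    have hdet : det ⟨1, n, 0⟩ B = 1 := by simp [det, B]
    refine ⟨_, isSymmGen_of_det_eq_one hdet, Finset.card_le_four, ?_⟩
    have hlen := abs_le_wordLen_of_det_eq_one hdet (α := -n) (β := 1) (by simp) (by simp [B]) g
    have hgx : 1 ≤ |g.x| := Int.one_le_abs hx
    have hn : 0 < n := by positivity
    have hlt : (M : ℤ) < |-n * g.x + 1 * g.y| :=
      calc (M : ℤ) < n * |g.x| - |g.y| := by nlinarith
        _ = |n * g.x| - |g.y| := by rw [abs_mul, abs_of_pos hn]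
        _ ≤ |n * g.x - g.y| := abs_sub_abs_le_abs_sub _ _
        _ = |-n * g.x + 1 * g.y| := by rw [← abs_neg]; ring_nf
    exact_mod_cast hlt.trans_le hlen

lemma GBoundD_eq_center : GBoundD HModel 4 = Subgroup.center HModel := by
  ext g
  refine ⟨fun ⟨M, _, hM⟩ => ?_, fun hg => ?_⟩
  · by_contra hg
    obtain ⟨S, hS, hcard, hlt⟩ := exists_isSymmGen_lt_wordLen hg M
    exact (hM S hS hcard).not_gt hlt
  · obtain ⟨k, rfl⟩ := Subgroup.mem_zpowers_iff.mp (center_eq_zpowers_C ▸ hg)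
    refine ⟨k.natAbs * 4 + 1, Nat.succ_pos _, fun S hS hcard => ?_⟩
    calc wordLen S (C ^ k) ≤ k.natAbs * wordLen S C := hS.wordLen_zpow_le C k
      _ ≤ k.natAbs * 4 := Nat.mul_le_mul_left _ (wordLen_C_le hS hcard)
      _ ≤ k.natAbs * 4 + 1 := Nat.le_succ _

end HModel

namespace Heisenberg

def a : Heisenberg := PresentedGroup.of 0
def b : Heisenberg := PresentedGroup.of 1
def c : Heisenberg := PresentedGroup.of 2

lemma a_mul_b : a * b = c * b * a := by
  have h : a * b * a⁻¹ * b⁻¹ * c⁻¹ = 1 := PresentedGroup.one_of_mem (by simp [heisenbergRels])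
  rw [mul_inv_eq_one] at h
  rw [← h]
  group

lemma commute_a_c : Commute a c := by
  have h : a * c * a⁻¹ * c⁻¹ = 1 := PresentedGroup.one_of_mem (by simp [heisenbergRels])
  rwa [mul_inv_eq_one, mul_inv_eq_iff_eq_mul] at h

lemma commute_b_c : Commute b c := by
  have h : b * c * b⁻¹ * c⁻¹ = 1 := PresentedGroup.one_of_mem (by simp [heisenbergRels])
  rwa [mul_inv_eq_one, mul_inv_eq_iff_eq_mul] at h

lemma c_mem_center : c ∈ Subgroup.center Heisenberg := by
  have : Subgroup.centralizer {c} = ⊤ := by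
    rw [eq_top_iff, ← PresentedGroup.closure_range_of, Subgroup.closure_le]
    rintro _ ⟨i, rfl⟩
    rw [SetLike.mem_coe, Subgroup.mem_centralizer_singleton_iff]
    fin_cases i
    exacts [commute_a_c.eq, commute_b_c.eq, rfl]
  exact Subgroup.centralizer_eq_top_iff_subset.mp this rfl

def toModel : Heisenberg →* HModel :=
  PresentedGroup.toGroup (f := ![HModel.A, HModel.B, HModel.C]) <| by
    rintro r (rfl | rfl | rfl) <;> ext <;> simp [HModel.A, HModel.B, HModel.C]

@[simp] lemma toModel_a : toModel a = HModel.A := PresentedGroup.toGroup.of _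
@[simp] lemma toModel_b : toModel b = HModel.B := PresentedGroup.toGroup.of _
@[simp] lemma toModel_c : toModel c = HModel.C := PresentedGroup.toGroup.of _

def ofModel : HModel →* Heisenberg where
  toFun g := c ^ g.z * b ^ g.y * a ^ g.x
  map_one' := by simp
  map_mul' g h := by
    have hc (k : ℤ) (x : Heisenberg) : x * c ^ k = c ^ k * x :=
      Subgroup.mem_center_iff.mp (zpow_mem c_mem_center k) x
    symm
    calc c ^ g.z * b ^ g.y * a ^ g.x * (c ^ h.z * b ^ h.y * a ^ h.x)
        = c ^ g.z * (b ^ g.y * a ^ g.x * c ^ h.z) * b ^ h.y * a ^ h.x := by group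
      _ = c ^ g.z * c ^ h.z * b ^ g.y * (a ^ g.x * b ^ h.y) * a ^ h.x := by rw [hc]; group
      _ = c ^ g.z * c ^ h.z * (b ^ g.y * c ^ (g.x * h.y)) * b ^ h.y * a ^ g.x * a ^ h.x := by
        rw [zpow_mul_zpow_eq_of_mul_eq commute_a_c commute_b_c a_mul_b]; group
      _ = c ^ (g * h).z * b ^ (g * h).y * a ^ (g * h).x := by
        rw [hc (g.x * h.y) (b ^ g.y)]
        simp only [HModel.mul_x, HModel.mul_y, HModel.mul_z]
        group

def equivModel : Heisenberg ≃* HModel :=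
  toModel.toMulEquiv ofModel
    (PresentedGroup.ext fun i => by fin_cases i <;> rfl)
    (MonoidHom.ext fun g => by
      simp only [ofModel, MonoidHom.comp_apply, MonoidHom.coe_mk, OneHom.coe_mk, map_mul, map_zpow,
        toModel_a, toModel_b, toModel_c, MonoidHom.id_apply]
      rw [HModel.C_zpow, HModel.A, HModel.B, HModel.mk_zpow (by simp), HModel.mk_zpow (by simp)]
      ext <;> simp)

lemma equivModel_c : equivModel c = HModel.C := toModel_c

end Heisenberg

/-- In the Heisenberg group, `G_bound(4)` equals the center, which is the
infinite cyclic subgroup generated by `c`; moreover `l_S(c) ≤ 4` for every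
symmetric generating set `S` of cardinality at most `4`. -/
theorem stmt18 :
    GBoundD Heisenberg 4 = (Subgroup.center Heisenberg : Set Heisenberg) ∧
    Subgroup.center Heisenberg =
      Subgroup.zpowers (PresentedGroup.of (rels := heisenbergRels) 2) ∧
    ¬ IsOfFinOrder (PresentedGroup.of (rels := heisenbergRels) 2) ∧
    (∀ S : Finset Heisenberg, IsSymmGen S → S.card ≤ 4 →
      wordLen S (PresentedGroup.of (rels := heisenbergRels) 2) ≤ 4) := by
  have hc : Heisenberg.equivModel (PresentedGroup.of 2) = HModel.C := Heisenberg.equivModel_c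
  refine ⟨?_, ?_, ?_, fun S hS hcard => ?_⟩
  · rw [← Heisenberg.equivModel.preimage_GBoundD, HModel.GBoundD_eq_center,
      ← Heisenberg.equivModel.comap_center, Subgroup.coe_comap]
    rfl
  · rw [← Heisenberg.equivModel.comap_center, HModel.center_eq_zpowers_C, ← hc,
      MulEquiv.comap_zpowers]
  · exact fun h => HModel.not_isOfFinOrder_C (hc ▸ Heisenberg.equivModel.toMonoidHom.isOfFinOrder h)
  · rw [← Heisenberg.equivModel.wordLen_map, hc]
    exact HModel.wordLen_C_le (Heisenberg.equivModel.isSymmGen_map hS) (by simpa using hcard)
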